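/- arXiv:1705.06730 — 5 statements merged into one kernel-verified Lean document; each statement's English description precedes it below -/
import Mathlib

section
/- Let k ≥ 1 and let Ã ∈ ℝ^{n×m} be a real matrix of rank exactly k. Then there exists a set S of k column indices of Ã such that every column Ã_i of Ã can be written as Ã_i = Σ_{j ∈ S} c_{i,j} Ã_j for real coefficients c_{i,j} with |c_{i,j}| ≤ 1 for all i and j. -/
/-!
Among all `k`-tuples of columns, pick one maximizing the absolute volume `|e.det (v ∘ f)|`
with respect to a fixed basis `e` of the column space. Since the columns span, the maximum is
nonzero, so the chosen columns form a basis. By Cramer's rule the coordinate of any column `v i`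
along the `a`-th chosen column is the volume of the tuple with its `a`-th entry replaced by `v i`,
divided by the maximal volume; hence it has absolute value at most `1`.
-/

open Module Submodule Set Function

lemma Module.Basis.exists_isUnit_det_comp {K W ι κ : Type*} [Field K] [AddCommGroup W]
    [Module K W] [Fintype κ] [DecidableEq κ] (e : Basis κ K W) (v : ι → W)
    (hv : span K (range v) = ⊤) :
    ∃ f : κ → ι, IsUnit (e.det (v ∘ f)) := by
  obtain ⟨κ', a, -, hsp, hli⟩ := exists_linearIndependent' K v
  let σ := e.indexEquiv (Basis.mk hli (hsp.trans hv).ge)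
  refine ⟨a ∘ σ, e.is_basis_iff_det.mp ⟨hli.comp σ σ.injective, ?_⟩⟩
  rw [← comp_assoc, range_comp, σ.range_eq_univ, image_univ, hsp, hv]

theorem exists_basis_comp_abs_repr_le_one {K W ι : Type*} [Field K] [LinearOrder K]
    [IsStrictOrderedRing K] [AddCommGroup W] [Module K W] [FiniteDimensional K W] [Finite ι]
    {k : ℕ} (hk : finrank K W = k) (v : ι → W) (hv : span K (range v) = ⊤) :
    ∃ f : Fin k → ι, ∃ b : Basis (Fin k) K W,
      ⇑b = v ∘ f ∧ ∀ i a, |b.repr (v i) a| ≤ 1 := by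
  let e := finBasisOfFinrankEq K W hk
  obtain ⟨f₀, hf₀⟩ := e.exists_isUnit_det_comp v hv
  have : Nonempty (Fin k → ι) := ⟨f₀⟩
  obtain ⟨f, hmax⟩ := Finite.exists_max fun f : Fin k → ι => |e.det (v ∘ f)|
  have hdet : e.det (v ∘ f) ≠ 0 :=
    abs_pos.mp ((abs_pos.mpr hf₀.ne_zero).trans_le (hmax f₀))
  obtain ⟨hli, hsp⟩ := e.is_basis_iff_det.mpr (isUnit_iff_ne_zero.mpr hdet)
  refine ⟨f, Basis.mk hli hsp.ge, Basis.coe_mk _ _, fun i a => ?_⟩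
  have hcramer :
      e.det (v ∘ update f a i) = e.det (v ∘ f) * (Basis.mk hli hsp.ge).repr (v i) a := by
    have := congr($(e.det_smul_mk_coord_eq_det_update hli hsp.ge a) (v i))
    simpa [comp_update] using this.symm
  have hle := hmax (update f a i)
  rw [hcramer, abs_mul] at hle
  exact le_of_mul_le_mul_left (by simpa using hle) (abs_pos.mpr hdet)

theorem exists_subfamily_repr_abs_le_one {K V ι : Type*} [Field K] [LinearOrder K]
    [IsStrictOrderedRing K] [AddCommGroup V] [Module K V] [Finite ι] {k : ℕ} (v : ι → V)
    (hk : finrank K (span K (range v)) = k) :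
    ∃ f : Fin k → ι, Injective f ∧
      ∀ i, ∃ c : Fin k → K, (∀ a, |c a| ≤ 1) ∧ v i = ∑ a, c a • v (f a) := by
  have : FiniteDimensional K (span K (range v)) := .span_of_finite K (finite_range v)
  let w : ι → span K (range v) := fun i => ⟨v i, subset_span (mem_range_self i)⟩
  have hw : span K (range w) = ⊤ := by
    rw [← span_span_coe_preimage]
    congr
    ext x
    simp [w, Subtype.ext_iff, eq_comm]
  obtain ⟨f, b, hb, hle⟩ := exists_basis_comp_abs_repr_le_one hk w hw
  refine ⟨f, (hb ▸ b.injective).of_comp, fun i => ⟨b.repr (w i), hle i, ?_⟩⟩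
  have := congr_arg Subtype.val (b.sum_repr (w i))
  simpa [hb, w] using this.symm

theorem exists_k_columns_spanning_with_small_coefficients_general
    {n m k : ℕ} (A : Matrix (Fin n) (Fin m) ℝ) (hrank : A.rank = k) :
    ∃ S : Finset (Fin m), S.card = k ∧
      ∃ c : Fin m → Fin m → ℝ,
        (∀ i : Fin m, ∀ j ∈ S, |c i j| ≤ 1) ∧
        (∀ i : Fin m, ∀ r : Fin n, A r i = ∑ j ∈ S, c i j * A r j) := by
  rw [Matrix.rank_eq_finrank_span_cols] at hrank
  obtain ⟨f, hf, hrepr⟩ := exists_subfamily_repr_abs_le_one A.col hrank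
  choose d hd_le hd using hrepr
  refine ⟨Finset.univ.image f, (Finset.card_image_of_injective _ hf).trans (Finset.card_fin k),
    fun i => extend f (d i) 0, ?_, ?_⟩
  · intro i j hj
    obtain ⟨a, -, rfl⟩ := Finset.mem_image.mp hj
    simpa [hf.extend_apply] using hd_le i a
  · intro i r
    rw [Finset.sum_image fun a _ b _ h => hf h]
    simpa [hf.extend_apply, Matrix.col_apply] using congrFun (hd i) r

/-- If `Ã ∈ ℝ^{n×m}` has rank exactly `k ≥ 1`, then there is a set `S` of `k`
column indices such that every column of `Ã` is a linear combination of the columns indexed by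
`S` with coefficients of absolute value at most `1`. -/
theorem exists_k_columns_spanning_with_small_coefficients
    {n m k : ℕ} (hk : 1 ≤ k) (A : Matrix (Fin n) (Fin m) ℝ) (hrank : A.rank = k) :
    ∃ S : Finset (Fin m), S.card = k ∧
      ∃ c : Fin m → Fin m → ℝ,
        (∀ i : Fin m, ∀ j ∈ S, |c i j| ≤ 1) ∧
        (∀ i : Fin m, ∀ r : Fin n, A r i = ∑ j ∈ S, c i j * A r j) :=
  exists_k_columns_spanning_with_small_coefficients_general A hrank
end

section
/- Let V ∈ ℝ^{k×m} be a matrix of rank k, and let S be a set of k column indices maximizing |det(V_S)| over all k-subsets of column indices, where V_S denotes the k×k submatrix of the columns of V indexed by S. Then det(V_S) ≠ 0, and for every column index i, the unique vector M_i ∈ ℝ^k solving V_S M_i = V_i satisfies |M_i(j)| ≤ 1 for every coordinate j; moreover M_i(j) = det(V_S^j)/det(V_S), where V_S^j is obtained from V_S by replacing its j-th column with V_i. -/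
open Matrix

/-! Replacing the column `S j` of `V_S` by `V_i` yields the submatrix of another column selection
(or one with a repeated column, hence of determinant `0`), so maximality bounds its determinant by
`|det V_S|`, and Cramer's rule turns this into `|M_i(j)| ≤ 1`. Full rank supplies some `k` columns
with nonzero determinant, so the maximum itself is nonzero. -/

namespace Matrix

section Rank

variable {n ι K : Type*} [Fintype n] [Fintype ι] [Field K]

theorem span_cols_eq_top_of_rank_eq {V : Matrix n ι K} (hrank : V.rank = Fintype.card n) :
    Submodule.span K (Set.range V.col) = ⊤ :=
  Submodule.eq_top_of_finrank_eq <| by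
    rw [← rank_eq_finrank_span_cols, hrank, Module.finrank_fintype_fun_eq_card]

theorem exists_det_submatrix_ne_zero_of_rank_eq [DecidableEq n] {V : Matrix n ι K}
    (hrank : V.rank = Fintype.card n) : ∃ T : n → ι, (V.submatrix id T).det ≠ 0 := by
  obtain ⟨κ, a, -, hspan, hli⟩ := exists_linearIndependent' K V.col
  rw [span_cols_eq_top_of_rank_eq hrank] at hspan
  let e : κ ≃ n := (Module.Basis.mk hli hspan.ge).indexEquiv (Pi.basisFun K n)
  refine ⟨a ∘ e.symm, ?_⟩
  have hcols : LinearIndependent K (V.submatrix id (a ∘ e.symm)).col :=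
    hli.comp e.symm e.symm.injective
  exact (isUnit_iff_isUnit_det _).mp (linearIndependent_cols_iff_isUnit.mp hcols) |>.ne_zero

end Rank

section Submatrix

variable {m n ι R : Type*} [DecidableEq n]

theorem submatrix_id_update_eq_updateCol (V : Matrix m ι R) (S : n → ι) (j : n) (i : ι) :
    V.submatrix id (Function.update S j i) = (V.submatrix id S).updateCol j (fun r => V r i) := by
  ext r c
  rcases eq_or_ne c j with rfl | hc
  · simp
  · simp [hc]

variable [Fintype n]

theorem det_submatrix_id_eq_zero_of_not_injective [CommRing R] (V : Matrix n ι R) {T : n → ι}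
    (hT : ¬Function.Injective T) : (V.submatrix id T).det = 0 := by
  obtain ⟨a, b, hab, hne⟩ := Function.not_injective_iff.mp hT
  exact det_zero_of_column_eq hne fun r => by simp [hab]

theorem abs_det_submatrix_id_le_of_forall_injective [CommRing R] [LinearOrder R]
    [IsStrictOrderedRing R] {V : Matrix n ι R} {S : n → ι}
    (hmax : ∀ T : n → ι, Function.Injective T →
      |(V.submatrix id T).det| ≤ |(V.submatrix id S).det|) (T : n → ι) :
    |(V.submatrix id T).det| ≤ |(V.submatrix id S).det| := by
  by_cases hT : Function.Injective T
  · exact hmax T hT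
  · rw [det_submatrix_id_eq_zero_of_not_injective V hT, abs_zero]
    exact abs_nonneg _

end Submatrix

section Cramer

variable {n R K : Type*} [Fintype n] [DecidableEq n]

theorem det_smul_eq_cramer_of_mulVec_eq [CommRing R] {A : Matrix n n R} {x b : n → R}
    (h : A *ᵥ x = b) : A.det • x = A.cramer b := by
  rw [cramer_eq_adjugate_mulVec, ← h, mulVec_mulVec, adjugate_mul, smul_mulVec, one_mulVec]

theorem eq_det_updateCol_div_det_of_mulVec_eq [Field K] {A : Matrix n n K} {x b : n → K}
    (hA : A.det ≠ 0) (h : A *ᵥ x = b) (j : n) : x j = (A.updateCol j b).det / A.det := by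
  rw [eq_div_iff hA, mul_comm, ← cramer_apply, ← det_smul_eq_cramer_of_mulVec_eq h,
    Pi.smul_apply, smul_eq_mul]

theorem existsUnique_mulVec_eq_of_det_ne_zero [Field K] {A : Matrix n n K} (hA : A.det ≠ 0)
    (b : n → K) : ∃! x, A *ᵥ x = b := by
  have hunit : IsUnit A := (isUnit_iff_isUnit_det A).mpr hA.isUnit
  exact (Function.bijective_iff_existsUnique _).mp
    ⟨mulVec_injective_iff_isUnit.mpr hunit, mulVec_surjective_iff_isUnit.mpr hunit⟩ b

end Cramer

end Matrix

theorem max_det_submatrix_cramer_coefficients_le_one_general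
    {k m : ℕ} (V : Matrix (Fin k) (Fin m) ℝ) (hrank : V.rank = k)
    (S : Fin k → Fin m)
    (hmax : ∀ T : Fin k → Fin m, Function.Injective T →
      |(V.submatrix id T).det| ≤ |(V.submatrix id S).det|) :
    (V.submatrix id S).det ≠ 0 ∧
    ∀ i : Fin m,
      (∃! M : Fin k → ℝ, (V.submatrix id S) *ᵥ M = fun r => V r i) ∧
      ∀ M : Fin k → ℝ, ((V.submatrix id S) *ᵥ M = fun r => V r i) →
        ∀ j : Fin k,
          |M j| ≤ 1 ∧
          M j = ((V.submatrix id S).updateCol j (fun r => V r i)).det /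
              (V.submatrix id S).det := by
  have hle := abs_det_submatrix_id_le_of_forall_injective hmax
  obtain ⟨T, hT⟩ := exists_det_submatrix_ne_zero_of_rank_eq (hrank.trans (Fintype.card_fin k).symm)
  have hdet : (V.submatrix id S).det ≠ 0 :=
    abs_pos.mp ((abs_pos.mpr hT).trans_le (hle T))
  refine ⟨hdet, fun i => ⟨existsUnique_mulVec_eq_of_det_ne_zero hdet _, fun M hM j => ?_⟩⟩
  have hcramer := eq_det_updateCol_div_det_of_mulVec_eq hdet hM j
  refine ⟨?_, hcramer⟩
  rw [hcramer, abs_div, div_le_one (abs_pos.mpr hdet), ← submatrix_id_update_eq_updateCol]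
  exact hle _

/-- Let `V ∈ ℝ^{k×m}` have rank `k` and let `S` be a set of `k` column indices
maximizing `|det(V_S)|` over all `k`-subsets of columns. Then `det(V_S) ≠ 0`, for every column
index `i` the system `V_S M = V_i` has a unique solution `M_i`, every solution has all
coordinates of absolute value at most `1`, and its `j`-th coordinate equals
`det(V_S^j) / det(V_S)` where `V_S^j` replaces the `j`-th column of `V_S` by `V_i`. -/
theorem max_det_submatrix_cramer_coefficients_le_one
    {k m : ℕ} (hk : 1 ≤ k) (V : Matrix (Fin k) (Fin m) ℝ) (hrank : V.rank = k)
    (S : Fin k → Fin m) (hS : Function.Injective S)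
    (hmax : ∀ T : Fin k → Fin m, Function.Injective T →
      |(V.submatrix id T).det| ≤ |(V.submatrix id S).det|) :
    (V.submatrix id S).det ≠ 0 ∧
    ∀ i : Fin m,
      (∃! M : Fin k → ℝ, (V.submatrix id S) *ᵥ M = fun r => V r i) ∧
      ∀ M : Fin k → ℝ, ((V.submatrix id S) *ᵥ M = fun r => V r i) →
        ∀ j : Fin k,
          |M j| ≤ 1 ∧
          M j = ((V.submatrix id S).updateCol j (fun r => V r i)).det /
              (V.submatrix id S).det :=
  max_det_submatrix_cramer_coefficients_le_one_general V hrank S hmax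
end

section
/- Let p ∈ [1, ∞), k ≥ 1, and A ∈ ℝ^{n×m} with m ≥ k. Then the minimum, over all sets S of k column indices and all matrices V ∈ ℝ^{k×m}, of |A − A_S V|_p is at most (k+1) times the minimum of |A − B|_p over all matrices B ∈ ℝ^{n×m} of rank at most k. -/
/-!
Write a matrix `B` of rank at most `k`, after an arbitrarily small perturbation, as `U * W` with
`W ∈ ℝ^{k×m}` having a nonsingular `k × k` minor, and put `δ = A - U * W`. Weight column `j` of
`W` by `1 / t_j`, where `t_j` is (slightly more than) the `ℓ_p` norm of column `j` of `δ`, and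
let `S` be the columns of a maximal-volume minor of the weighted matrix. By Cramer's rule
`W = W_S * V` with `|V_{lj}| ≤ t_j / t_{S l}`, so `A - A_S * V = δ - δ_S * V`, and `δ_S * V` is a
sum of `k` rank-one matrices, each of `ℓ_p` norm at most `|t|_p ≈ |δ|_p`.
-/

open Matrix

/-- The entrywise `ℓ_p` norm of a matrix `M ∈ ℝ^{n×m}`, for real `p`. -/
noncomputable def matLpNorm {n m : ℕ} (p : ℝ) (M : Matrix (Fin n) (Fin m) ℝ) : ℝ :=
  (∑ i, ∑ j, |M i j| ^ p) ^ (1 / p)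

open Finset

noncomputable def vecLpNorm {ι : Type*} [Fintype ι] (p : ℝ) (v : ι → ℝ) : ℝ :=
  (∑ i, |v i| ^ p) ^ (1 / p)

section LpNorm

variable {ι : Type*} [Fintype ι] {p : ℝ}

lemma vecLpNorm_nonneg (v : ι → ℝ) : 0 ≤ vecLpNorm p v := by
  unfold vecLpNorm; positivity

lemma vecLpNorm_zero (hp : p ≠ 0) : vecLpNorm p (0 : ι → ℝ) = 0 := by
  simp [vecLpNorm, Real.zero_rpow hp, Real.zero_rpow (inv_ne_zero hp)]

lemma vecLpNorm_add_le (hp : 1 ≤ p) (u v : ι → ℝ) :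
    vecLpNorm p (u + v) ≤ vecLpNorm p u + vecLpNorm p v :=
  Real.Lp_add_le univ u v hp

lemma vecLpNorm_sub_le (hp : 1 ≤ p) (u v : ι → ℝ) :
    vecLpNorm p (u - v) ≤ vecLpNorm p u + vecLpNorm p v := by
  simpa [vecLpNorm, sub_eq_add_neg] using Real.Lp_add_le univ u (-v) hp

lemma vecLpNorm_sum_le (hp : 1 ≤ p) {α : Type*} (s : Finset α) (f : α → ι → ℝ) :
    vecLpNorm p (∑ a ∈ s, f a) ≤ ∑ a ∈ s, vecLpNorm p (f a) :=
  le_sum_of_subadditive _ (vecLpNorm_zero (by linarith)).le (vecLpNorm_add_le hp) s f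

lemma vecLpNorm_const_mul (hp : p ≠ 0) (c : ℝ) (v : ι → ℝ) :
    vecLpNorm p (fun i => c * v i) = |c| * vecLpNorm p v := by
  simp only [vecLpNorm, abs_mul, Real.mul_rpow (abs_nonneg _) (abs_nonneg _), ← mul_sum]
  rw [Real.mul_rpow (by positivity) (by positivity), one_div, Real.rpow_rpow_inv (abs_nonneg _) hp]

lemma vecLpNorm_const (hp : p ≠ 0) (c : ℝ) :
    vecLpNorm p (fun _ : ι => c) = (Fintype.card ι : ℝ) ^ (1 / p) * |c| := by
  simp only [vecLpNorm, sum_const, card_univ, nsmul_eq_mul]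
  rw [Real.mul_rpow (by positivity) (by positivity), one_div, Real.rpow_rpow_inv (abs_nonneg _) hp]

lemma vecLpNorm_le_of_abs_le (hp : 0 ≤ p) {u v : ι → ℝ} (h : ∀ i, |u i| ≤ |v i|) :
    vecLpNorm p u ≤ vecLpNorm p v := by
  unfold vecLpNorm
  gcongr ?_ ^ _
  exact sum_le_sum fun i _ => Real.rpow_le_rpow (abs_nonneg _) (h i) hp

end LpNorm

section MatLpNorm

variable {n m : ℕ} {p : ℝ}

lemma matLpNorm_eq_vecLpNorm (M : Matrix (Fin n) (Fin m) ℝ) :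
    matLpNorm p M = vecLpNorm p (fun x : Fin n × Fin m => M x.1 x.2) := by
  rw [matLpNorm, vecLpNorm, Fintype.sum_prod_type]

lemma matLpNorm_nonneg (M : Matrix (Fin n) (Fin m) ℝ) : 0 ≤ matLpNorm p M :=
  (matLpNorm_eq_vecLpNorm M).symm ▸ vecLpNorm_nonneg _

lemma matLpNorm_add_le (hp : 1 ≤ p) (M N : Matrix (Fin n) (Fin m) ℝ) :
    matLpNorm p (M + N) ≤ matLpNorm p M + matLpNorm p N := by
  simp only [matLpNorm_eq_vecLpNorm]
  exact vecLpNorm_add_le hp _ _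

lemma matLpNorm_sub_le (hp : 1 ≤ p) (M N : Matrix (Fin n) (Fin m) ℝ) :
    matLpNorm p (M - N) ≤ matLpNorm p M + matLpNorm p N := by
  simp only [matLpNorm_eq_vecLpNorm]
  exact vecLpNorm_sub_le hp _ _

lemma matLpNorm_sum_le (hp : 1 ≤ p) {α : Type*} (s : Finset α)
    (f : α → Matrix (Fin n) (Fin m) ℝ) :
    matLpNorm p (∑ a ∈ s, f a) ≤ ∑ a ∈ s, matLpNorm p (f a) := by
  simp only [matLpNorm_eq_vecLpNorm]
  convert vecLpNorm_sum_le hp s (fun a (x : Fin n × Fin m) => f a x.1 x.2) with x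
  simp [Matrix.sum_apply]

lemma matLpNorm_smul (hp : p ≠ 0) (c : ℝ) (M : Matrix (Fin n) (Fin m) ℝ) :
    matLpNorm p (c • M) = |c| * matLpNorm p M := by
  simp only [matLpNorm_eq_vecLpNorm, Matrix.smul_apply, smul_eq_mul]
  exact vecLpNorm_const_mul hp c _

lemma matLpNorm_vecMulVec (u : Fin n → ℝ) (v : Fin m → ℝ) :
    matLpNorm p (vecMulVec u v) = vecLpNorm p u * vecLpNorm p v := by
  simp only [matLpNorm, vecLpNorm, vecMulVec_apply, abs_mul,
    Real.mul_rpow (abs_nonneg _) (abs_nonneg _), ← mul_sum, ← sum_mul]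
  exact Real.mul_rpow (by positivity) (by positivity)

lemma matLpNorm_eq_vecLpNorm_col (hp : p ≠ 0) (M : Matrix (Fin n) (Fin m) ℝ) :
    matLpNorm p M = vecLpNorm p (fun j => vecLpNorm p (M.col j)) := by
  simp only [matLpNorm, vecLpNorm, col_apply, abs_of_nonneg (Real.rpow_nonneg
    (sum_nonneg fun _ _ => Real.rpow_nonneg (abs_nonneg _) p) _), one_div,
    Real.rpow_inv_rpow (sum_nonneg fun _ _ => Real.rpow_nonneg (abs_nonneg _) p) hp]
  rw [sum_comm]

end MatLpNorm

section Factorization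

variable {K ι κ : Type*} [Field K] [Fintype ι] [Fintype κ]

lemma Matrix.exists_eq_mul_fin_rank (B : Matrix ι κ K) :
    ∃ (U : Matrix ι (Fin B.rank) K) (W : Matrix (Fin B.rank) κ K), B = U * W := by
  let C := Submodule.span K (Set.range B.col)
  let b : Module.Basis (Fin B.rank) K C :=
    Module.finBasisOfFinrankEq K C B.rank_eq_finrank_span_cols.symm
  have hcol (j : κ) : B.col j ∈ C := Submodule.subset_span ⟨j, rfl⟩
  refine ⟨of fun i l => (b l : ι → K) i, of fun l j => b.repr ⟨B.col j, hcol j⟩ l, ?_⟩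
  ext i j
  have hsum := congr_fun (congrArg Subtype.val (b.sum_repr ⟨B.col j, hcol j⟩)) i
  simp only [Submodule.coe_sum, Submodule.coe_smul, col_apply] at hsum
  simp [mul_apply, ← hsum, mul_comm]

lemma Matrix.exists_eq_mul_of_rank_le {k : ℕ} (B : Matrix ι κ K) (h : B.rank ≤ k) :
    ∃ (U : Matrix ι (Fin k) K) (W : Matrix (Fin k) κ K), B = U * W := by
  obtain ⟨U, W, hB⟩ := B.exists_eq_mul_fin_rank
  let e : Fin k ≃ Fin B.rank ⊕ Fin (k - B.rank) :=
    (finCongr (by omega)).trans finSumFinEquiv.symm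
  refine ⟨(fromCols U 0).submatrix id e, (fromRows W 0).submatrix e id, ?_⟩
  rw [submatrix_mul_equiv, fromCols_mul_fromRows, Matrix.zero_mul, add_zero, submatrix_id_id]
  exact hB

end Factorization

lemma Matrix.exists_det_add_smul_one_ne_zero {K ι : Type*} [Field K] [LinearOrder K]
    [IsStrictOrderedRing K] [Fintype ι] [DecidableEq ι] (M : Matrix ι ι K) {η₀ : K}
    (hη₀ : 0 < η₀) : ∃ η, 0 < η ∧ η < η₀ ∧ (M + η • 1).det ≠ 0 := by
  obtain ⟨η, ⟨hη0, hηη₀⟩, hη⟩ := ((Set.Ioo_infinite hη₀).sdiff (-M).finite_spectrum).nonempty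
  refine ⟨η, hη0, hηη₀, ?_⟩
  rw [spectrum.notMem_iff, Algebra.algebraMap_eq_smul_one, sub_neg_eq_add, add_comm,
    isUnit_iff_isUnit_det] at hη
  exact hη.ne_zero

section MaxVolume

variable {K ι κ : Type*} [Field K] [Fintype ι] [DecidableEq ι]

lemma Matrix.inv_submatrix_mul_apply (Y : Matrix ι κ K) (S : ι → κ) (l : ι) (j : κ) :
    ((Y.submatrix id S)⁻¹ * Y) l j =
      (Y.submatrix id (Function.update S l j)).det / (Y.submatrix id S).det := by
  -- Cramer's rule; both sides are `0` when the minor is singular.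
  have hupd : (Y.submatrix id S).updateCol l (Y.col j) =
      Y.submatrix id (Function.update S l j) := by
    ext i l'
    by_cases h : l' = l <;> simp [h]
  rw [div_eq_inv_mul, ← hupd, ← cramer_apply, cramer_eq_adjugate_mulVec, inv_def,
    Ring.inverse_eq_inv', Matrix.smul_mul, Matrix.smul_apply, smul_eq_mul]
  rfl

variable [LinearOrder K] [IsStrictOrderedRing K] [Fintype κ]

lemma Matrix.exists_submatrix_mul_eq_self_abs_le_one (Y : Matrix ι κ K)
    (hY : ∃ S, (Y.submatrix id S).det ≠ 0) :
    ∃ S : ι → κ, Function.Injective S ∧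
      ∃ C : Matrix ι κ K, (∀ l j, |C l j| ≤ 1) ∧ Y.submatrix id S * C = Y := by
  obtain ⟨S₁, hS₁⟩ := hY
  have : Nonempty (ι → κ) := ⟨S₁⟩
  obtain ⟨S, hmax⟩ := Finite.exists_max fun S : ι → κ => |(Y.submatrix id S).det|
  have hS : (Y.submatrix id S).det ≠ 0 := by
    intro h0
    have := hmax S₁
    rw [h0, abs_zero] at this
    exact hS₁ (abs_nonpos_iff.1 this)
  refine ⟨S, fun a b hab => ?_, _, fun l j => ?_, mul_nonsing_inv_cancel_left _ _ hS.isUnit⟩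
  · by_contra hne
    exact hS (det_zero_of_column_eq hne fun i => by simp [hab])
  · rw [inv_submatrix_mul_apply, abs_div, div_le_one (abs_pos.2 hS)]
    exact hmax _

lemma Matrix.exists_submatrix_mul_eq_self_abs_le_div (W : Matrix ι κ K)
    (hW : ∃ S, (W.submatrix id S).det ≠ 0) {t : κ → K} (ht : ∀ j, 0 < t j) :
    ∃ S : ι → κ, Function.Injective S ∧
      ∃ V : Matrix ι κ K, (∀ l j, |V l j| ≤ t j / t (S l)) ∧ W.submatrix id S * V = W := by
  let Y : Matrix ι κ K := of fun i j => W i j / t j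
  have hYS (S : ι → κ) :
      Y.submatrix id S = W.submatrix id S * diagonal fun l => (t (S l))⁻¹ := by
    ext
    simp [Y, div_eq_mul_inv]
  obtain ⟨S₁, hS₁⟩ := hW
  obtain ⟨S, hS, C, hC, hYC⟩ := Y.exists_submatrix_mul_eq_self_abs_le_one ⟨S₁, by
    rw [hYS, det_mul, det_diagonal]
    exact mul_ne_zero hS₁ (prod_ne_zero_iff.2 fun l _ => inv_ne_zero (ht _).ne')⟩
  refine ⟨S, hS, of fun l j => C l j * t j / t (S l), fun l j => ?_, ?_⟩
  · rw [of_apply, abs_div, abs_mul, abs_of_pos (ht _), abs_of_pos (ht _)]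
    exact div_le_div_of_nonneg_right (mul_le_of_le_one_left (ht j).le (hC l j)) (ht _).le
  · ext i j
    have hYij := congr_fun (congr_fun hYC i) j
    simp only [Y, mul_apply, submatrix_apply, id, of_apply] at hYij ⊢
    calc ∑ l, W i (S l) * (C l j * t j / t (S l))
        = (∑ l, W i (S l) / t (S l) * C l j) * t j := by
          rw [sum_mul]
          exact sum_congr rfl fun l _ => by ring
      _ = W i j := by rw [hYij, div_mul_cancel₀ _ (ht j).ne']

end MaxVolume

lemma le_of_forall_pos_le_add_mul {α : Type*} [Field α] [LinearOrder α] [IsStrictOrderedRing α]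
    {a b c : α} (hc : 0 ≤ c) (h : ∀ ε > 0, a ≤ b + c * ε) : a ≤ b := by
  refine le_of_forall_pos_le_add fun ε hε => (h (ε / (c + 1)) (by positivity)).trans ?_
  gcongr
  rw [mul_div_assoc', div_le_iff₀ (by positivity)]
  nlinarith

section Approximation

variable {n m k : ℕ} {p : ℝ}

lemma matLpNorm_submatrix_mul_le (hp : 1 ≤ p) (δ : Matrix (Fin n) (Fin m) ℝ)
    (S : Fin k → Fin m) (V : Matrix (Fin k) (Fin m) ℝ) {t : Fin m → ℝ} (ht : ∀ j, 0 < t j)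
    (hδ : ∀ j, vecLpNorm p (δ.col j) ≤ t j) (hV : ∀ l j, |V l j| ≤ t j / t (S l)) :
    matLpNorm p (δ.submatrix id S * V) ≤ k * vecLpNorm p t := by
  have hp0 : p ≠ 0 := by linarith
  have hrow (l : Fin k) : vecLpNorm p (V l) ≤ (t (S l))⁻¹ * vecLpNorm p t := by
    rw [← abs_of_pos (inv_pos.2 (ht (S l))), ← vecLpNorm_const_mul hp0]
    refine vecLpNorm_le_of_abs_le (by linarith) fun j => ?_
    rw [abs_mul, abs_of_pos (inv_pos.2 (ht _)), abs_of_pos (ht j), inv_mul_eq_div]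
    exact hV l j
  calc matLpNorm p (δ.submatrix id S * V)
      = matLpNorm p (∑ l, vecMulVec (δ.col (S l)) (V l)) := by
        congr 1
        ext i j
        simp [mul_apply, vecMulVec_apply, Matrix.sum_apply]
    _ ≤ ∑ l, vecLpNorm p (δ.col (S l)) * vecLpNorm p (V l) := by
        simpa only [matLpNorm_vecMulVec] using
          matLpNorm_sum_le hp univ fun l => vecMulVec (δ.col (S l)) (V l)
    _ ≤ ∑ _l : Fin k, vecLpNorm p t := sum_le_sum fun l _ => by
        calc _ ≤ t (S l) * ((t (S l))⁻¹ * vecLpNorm p t) :=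
              mul_le_mul (hδ _) (hrow l) (vecLpNorm_nonneg _) (ht _).le
          _ = vecLpNorm p t := mul_inv_cancel_left₀ (ht _).ne' _
    _ = k * vecLpNorm p t := by simp

lemma exists_matLpNorm_sub_submatrix_mul_le (hp : 1 ≤ p) (A : Matrix (Fin n) (Fin m) ℝ)
    (U : Matrix (Fin n) (Fin k) ℝ) (W : Matrix (Fin k) (Fin m) ℝ)
    (hW : ∃ S, (W.submatrix id S).det ≠ 0) {ε : ℝ} (hε : 0 < ε) :
    ∃ S : Fin k → Fin m, Function.Injective S ∧ ∃ V : Matrix (Fin k) (Fin m) ℝ,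
      matLpNorm p (A - A.submatrix id S * V) ≤
        (k + 1) * matLpNorm p (A - U * W) + k * m ^ (1 / p) * ε := by
  have hp0 : p ≠ 0 := by linarith
  set δ := A - U * W with hδ
  -- `ε` keeps the weights positive when a column of `δ` vanishes.
  set t : Fin m → ℝ := fun j => vecLpNorm p (δ.col j) + ε
  have ht (j : Fin m) : 0 < t j := add_pos_of_nonneg_of_pos (vecLpNorm_nonneg _) hε
  obtain ⟨S, hS, V, hV, hWV⟩ := W.exists_submatrix_mul_eq_self_abs_le_div hW ht
  refine ⟨S, hS, V, ?_⟩
  have hA : A - A.submatrix id S * V = δ - δ.submatrix id S * V := by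
    have hUWS : (U * W).submatrix id S = U * W.submatrix id S := by
      ext
      simp [mul_apply]
    have hAS : A.submatrix id S * V = δ.submatrix id S * V + U * W := by
      rw [← hWV, ← Matrix.mul_assoc, ← hUWS, ← Matrix.add_mul]
      congr 1
      ext
      simp [hδ]
    rw [hAS, hδ]
    abel
  have hT : vecLpNorm p t ≤ matLpNorm p δ + m ^ (1 / p) * ε := by
    calc vecLpNorm p t
        ≤ vecLpNorm p (fun j => vecLpNorm p (δ.col j)) + vecLpNorm p (fun _ : Fin m => ε) :=
          vecLpNorm_add_le hp _ _
      _ = _ := by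
          rw [← matLpNorm_eq_vecLpNorm_col hp0, vecLpNorm_const hp0, Fintype.card_fin,
            abs_of_pos hε]
  have hδS := matLpNorm_submatrix_mul_le hp δ S V ht (fun j => le_add_of_nonneg_right hε.le) hV
  calc matLpNorm p (A - A.submatrix id S * V)
      ≤ matLpNorm p δ + k * vecLpNorm p t := hA ▸ (matLpNorm_sub_le hp _ _).trans (by gcongr)
    _ ≤ matLpNorm p δ + k * (matLpNorm p δ + m ^ (1 / p) * ε) := by gcongr
    _ = _ := by ring

lemma exists_mul_near_of_rank_le (hp : p ≠ 0) (hm : k ≤ m) (B : Matrix (Fin n) (Fin m) ℝ)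
    (hB : B.rank ≤ k) {ε : ℝ} (hε : 0 < ε) :
    ∃ (U : Matrix (Fin n) (Fin k) ℝ) (W : Matrix (Fin k) (Fin m) ℝ),
      (∃ S, (W.submatrix id S).det ≠ 0) ∧ matLpNorm p (B - U * W) ≤ ε := by
  obtain ⟨U, W, rfl⟩ := B.exists_eq_mul_of_rank_le hB
  set S₀ := Fin.castLE hm
  -- The `S₀`-minor of `W + η • G` is `W_{S₀} + η • 1`, singular for only finitely many `η`.
  let G : Matrix (Fin k) (Fin m) ℝ := of fun l j => if S₀ l = j then 1 else 0
  have hG : G.submatrix id S₀ = 1 := by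
    ext l l'
    simp [G, S₀, one_apply]
  have hc : 0 ≤ matLpNorm p (U * G) := matLpNorm_nonneg _
  obtain ⟨η, hη0, hηε, hdet⟩ := (W.submatrix id S₀).exists_det_add_smul_one_ne_zero
    (η₀ := ε / (matLpNorm p (U * G) + 1)) (by positivity)
  refine ⟨U, W + η • G, ⟨S₀, by rwa [← hG] at hdet⟩, ?_⟩
  rw [Matrix.mul_add, Matrix.mul_smul, sub_add_cancel_left, ← neg_smul, matLpNorm_smul hp,
    abs_neg, abs_of_pos hη0]
  rw [lt_div_iff₀ (by positivity)] at hηε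
  nlinarith

end Approximation

theorem column_subset_selection_lp_approx_general
    {n m k : ℕ} (p : ℝ) (hp : 1 ≤ p) (hm : k ≤ m)
    (A : Matrix (Fin n) (Fin m) ℝ) :
    sInf {c : ℝ | ∃ S : Fin k → Fin m, Function.Injective S ∧
        ∃ V : Matrix (Fin k) (Fin m) ℝ, c = matLpNorm p (A - A.submatrix id S * V)}
      ≤ ((k : ℝ) + 1) *
        sInf {c : ℝ | ∃ B : Matrix (Fin n) (Fin m) ℝ, B.rank ≤ k ∧ c = matLpNorm p (A - B)} := by
  set L := {c : ℝ | ∃ S : Fin k → Fin m, Function.Injective S ∧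
    ∃ V : Matrix (Fin k) (Fin m) ℝ, c = matLpNorm p (A - A.submatrix id S * V)}
  have hL : BddBelow L := ⟨0, by rintro _ ⟨S, -, V, rfl⟩; exact matLpNorm_nonneg _⟩
  have hL_le (B : Matrix (Fin n) (Fin m) ℝ) (hB : B.rank ≤ k) :
      sInf L ≤ (k + 1) * matLpNorm p (A - B) := by
    refine le_of_forall_pos_le_add_mul (c := k + 1 + k * m ^ (1 / p)) (by positivity)
      fun ε hε => ?_
    obtain ⟨U, W, hW, hBUW⟩ := exists_mul_near_of_rank_le (p := p) (by linarith) hm B hB hε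
    obtain ⟨S, hS, V, hV⟩ := exists_matLpNorm_sub_submatrix_mul_le hp A U W hW hε
    have hAUW : matLpNorm p (A - U * W) ≤ matLpNorm p (A - B) + ε := by
      simpa using (matLpNorm_add_le hp (A - B) (B - U * W)).trans (by gcongr)
    calc sInf L ≤ matLpNorm p (A - A.submatrix id S * V) := csInf_le hL ⟨S, hS, V, rfl⟩
      _ ≤ (k + 1) * (matLpNorm p (A - B) + ε) + k * m ^ (1 / p) * ε := hV.trans (by gcongr)
      _ = _ := by ring
  rw [← div_le_iff₀' (by positivity)]
  refine le_csInf ⟨_, 0, by simp, rfl⟩ ?_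
  rintro _ ⟨B, hB, rfl⟩
  rw [div_le_iff₀' (by positivity)]
  exact hL_le B hB

/-- For `p ∈ [1, ∞)`, `k ≥ 1` and `A ∈ ℝ^{n×m}` with `m ≥ k`, the minimum of
`|A - A_S V|_p` over sets `S` of `k` column indices and matrices `V ∈ ℝ^{k×m}` is at most
`(k+1)` times the minimum of `|A - B|_p` over matrices `B` of rank at most `k`. -/
theorem column_subset_selection_lp_approx
    {n m k : ℕ} (p : ℝ) (hp : 1 ≤ p) (hk : 1 ≤ k) (hm : k ≤ m)
    (A : Matrix (Fin n) (Fin m) ℝ) :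
    sInf {c : ℝ | ∃ S : Fin k → Fin m, Function.Injective S ∧
        ∃ V : Matrix (Fin k) (Fin m) ℝ, c = matLpNorm p (A - A.submatrix id S * V)}
      ≤ ((k : ℝ) + 1) *
        sInf {c : ℝ | ∃ B : Matrix (Fin n) (Fin m) ℝ, B.rank ≤ k ∧ c = matLpNorm p (A - B)} :=
  column_subset_selection_lp_approx_general p hp hm A
end

section
/- Let k ≥ 1 and A ∈ ℝ^{n×m} with m ≥ k. Then the minimum, over all sets S of k column indices and all matrices V ∈ ℝ^{k×m}, of |A − A_S V|_∞ is at most (k+1) times the minimum of |A − B|_∞ over all matrices B ∈ ℝ^{n×m} of rank at most k. -/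
/-!
If `rank B = r`, pick `r` columns `B_T` maximising the Gram determinant
`det (B_Tᵀ B_T)`; it is positive, so these columns span the column space and `B = B_T V`.
Replacing column `T l` by column `j` multiplies `B_T` on the right by the identity with its
`l`-th column replaced by `V_{·j}`, so it scales the Gram determinant by `V l j ^ 2`, and
maximality forces `|V l j| ≤ 1`. Padding `T` with unused columns (and `V` with zero rows) gives
`k` columns. Then `A - A_T V = E - E_T V` with `E = A - B`, whose entries are bounded by
`(1 + k) |E|_∞`.
-/

open Matrix

noncomputable def matSupNorm {n m : ℕ} (M : Matrix (Fin n) (Fin m) ℝ) : ℝ :=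
  ⨆ i, ⨆ j, |M i j|

open Function

section Gram

variable {ι σ κ : Type*} [Fintype ι] [Fintype κ] [DecidableEq κ]

noncomputable def gramDet (M : Matrix ι κ ℝ) : ℝ := det (Mᵀ * M)

lemma gramDet_nonneg (M : Matrix ι κ ℝ) : 0 ≤ gramDet M :=
  (posSemidef_conjTranspose_mul_self M).det_nonneg

lemma gramDet_ne_zero_iff (M : Matrix ι κ ℝ) :
    gramDet M ≠ 0 ↔ LinearIndependent ℝ M.col := by
  rw [gramDet, ← mulVec_injective_iff, ← isUnit_iff_ne_zero, ← isUnit_iff_isUnit_det,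
    ← mulVec_injective_iff_isUnit]
  change Injective (Mᵀ * M).mulVecLin ↔ Injective M.mulVecLin
  rw [← LinearMap.ker_eq_bot, ← LinearMap.ker_eq_bot, ker_mulVecLin_transpose_mul_self]

lemma gramDet_pos_iff (M : Matrix ι κ ℝ) : 0 < gramDet M ↔ LinearIndependent ℝ M.col := by
  rw [← gramDet_ne_zero_iff, (gramDet_nonneg M).lt_iff_ne']

lemma gramDet_submatrix_update [DecidableEq σ] {B : Matrix ι σ ℝ} {S : κ → σ}
    {V : Matrix κ σ ℝ} (hV : B.submatrix id S * V = B) (l : κ) (j : σ) :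
    gramDet (B.submatrix id (update S l j)) = V l j ^ 2 * gramDet (B.submatrix id S) := by
  set E := (1 : Matrix κ κ ℝ).updateCol l (Vᵀ j)
  have hE : B.submatrix id (update S l j) = B.submatrix id S * E := by
    rw [mul_updateCol, Matrix.mul_one]
    ext a b
    rcases eq_or_ne b l with rfl | hb
    · simpa [mulVec, dotProduct, mul_apply] using (congrFun (congrFun hV a) j).symm
    · simp [hb]
  have hdetE : det E = V l j := by
    rw [← cramer_apply, cramer_one]
    rfl
  rw [hE, gramDet, gramDet, transpose_mul, Matrix.mul_assoc, ← Matrix.mul_assoc _ _ E,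
    det_mul, det_mul, det_transpose, hdetE]
  ring

end Gram

def HasBoundedColumnFactorization {ι σ : Type*} (B : Matrix ι σ ℝ) (κ : Type*) [Fintype κ] :
    Prop :=
  ∃ S : κ → σ, Injective S ∧
    ∃ V : Matrix κ σ ℝ, (∀ l j, |V l j| ≤ 1) ∧ B.submatrix id S * V = B

section ColumnFactorization

variable {ι σ : Type*} [Fintype σ] {B : Matrix ι σ ℝ}

lemma exists_linearIndependent_submatrix_col (B : Matrix ι σ ℝ) :
    ∃ T : Fin B.rank → σ, LinearIndependent ℝ (B.submatrix id T).col := by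
  obtain ⟨κ, a, ha, hspan, hli⟩ := exists_linearIndependent' ℝ B.col
  have : Finite κ := Finite.of_injective a ha
  have : Fintype κ := Fintype.ofFinite κ
  have hcard : Fintype.card κ = B.rank := by
    rw [rank_eq_finrank_span_cols, ← hspan, finrank_span_eq_card hli]
  let e : Fin B.rank ≃ κ := (Fintype.equivFinOfCardEq hcard).symm
  exact ⟨a ∘ e, hli.comp e e.injective⟩

lemma exists_submatrix_mul_eq_of_linearIndependent [Fintype ι] {κ : Type*} [Fintype κ]
    {S : κ → σ} (hS : LinearIndependent ℝ (B.submatrix id S).col)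
    (hrank : B.rank ≤ Fintype.card κ) : ∃ V : Matrix κ σ ℝ, B.submatrix id S * V = B := by
  have hspan : Submodule.span ℝ (Set.range (B.submatrix id S).col)
      = Submodule.span ℝ (Set.range B.col) := by
    refine Submodule.eq_of_le_of_finrank_le
      (Submodule.span_mono (Set.range_subset_iff.2 fun l => ⟨S l, rfl⟩)) ?_
    rwa [finrank_span_eq_card hS, ← rank_eq_finrank_span_cols]
  have hcol : ∀ j, B.col j ∈ LinearMap.range (B.submatrix id S).mulVecLin := fun j => by
    rw [range_mulVecLin, hspan]
    exact Submodule.subset_span ⟨j, rfl⟩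
  choose v hv using hcol
  refine ⟨(of v)ᵀ, ?_⟩
  ext a j
  simpa [mul_apply, mulVec, dotProduct] using congrFun (hv j) a

theorem hasBoundedColumnFactorization_of_linearIndependent [Fintype ι] [DecidableEq σ]
    {κ : Type*} [Fintype κ] [DecidableEq κ] {T : κ → σ}
    (hT : LinearIndependent ℝ (B.submatrix id T).col) (hrank : B.rank ≤ Fintype.card κ) :
    HasBoundedColumnFactorization B κ := by
  have : Nonempty (κ → σ) := ⟨T⟩
  obtain ⟨S, hmax⟩ := Finite.exists_max fun S : κ → σ => gramDet (B.submatrix id S)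
  have hpos : 0 < gramDet (B.submatrix id S) := ((gramDet_pos_iff _).2 hT).trans_le (hmax T)
  have hS := (gramDet_pos_iff _).1 hpos
  obtain ⟨V, hV⟩ := exists_submatrix_mul_eq_of_linearIndependent hS hrank
  refine ⟨S, fun a b hab => hS.injective (by ext; simp [hab]), V, fun l j => ?_, hV⟩
  have hle := hmax (update S l j)
  rw [gramDet_submatrix_update hV] at hle
  exact (sq_le_one_iff_abs_le_one _).1 ((mul_le_iff_le_one_left hpos).1 hle)

lemma HasBoundedColumnFactorization.succ {k : ℕ} (h : HasBoundedColumnFactorization B (Fin k))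
    (hk : k < Fintype.card σ) : HasBoundedColumnFactorization B (Fin (k + 1)) := by
  obtain ⟨S, hS, V, hV, hBV⟩ := h
  obtain ⟨j, hj⟩ : ∃ j, j ∉ Set.range S := by
    by_contra! hsurj
    have := Fintype.card_le_of_surjective S hsurj
    simp only [Fintype.card_fin] at this
    omega
  refine ⟨Fin.snoc S j, Fin.snoc_injective_of_injective hS hj, of (Fin.snoc (of.symm V) 0),
    fun l j' => ?_, ?_⟩
  · cases l using Fin.lastCases <;> simp [hV]
  · ext a b
    rw [mul_apply, Fin.sum_univ_castSucc]
    simpa [mul_apply] using congrFun (congrFun hBV a) b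

theorem hasBoundedColumnFactorization_of_rank_le [Fintype ι] [DecidableEq σ] {k : ℕ}
    (hrank : B.rank ≤ k) (hk : k ≤ Fintype.card σ) :
    HasBoundedColumnFactorization B (Fin k) := by
  induction k, hrank using Nat.le_induction with
  | base =>
    obtain ⟨T, hT⟩ := exists_linearIndependent_submatrix_col B
    exact hasBoundedColumnFactorization_of_linearIndependent hT (Fintype.card_fin _).ge
  | succ k _ ih => exact (ih (by omega)).succ (by omega)

end ColumnFactorization

section matSupNorm

variable {n m : ℕ}

lemma matSupNorm_nonneg (M : Matrix (Fin n) (Fin m) ℝ) : 0 ≤ matSupNorm M :=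
  Real.iSup_nonneg fun _ => Real.iSup_nonneg fun _ => abs_nonneg _

lemma abs_apply_le_matSupNorm (M : Matrix (Fin n) (Fin m) ℝ) (i : Fin n) (j : Fin m) :
    |M i j| ≤ matSupNorm M :=
  (le_ciSup (Set.finite_range _).bddAbove j).trans
    (le_ciSup (f := fun i => ⨆ j, |M i j|) (Set.finite_range _).bddAbove i)

lemma matSupNorm_le {M : Matrix (Fin n) (Fin m) ℝ} {c : ℝ} (hc : 0 ≤ c)
    (h : ∀ i j, |M i j| ≤ c) : matSupNorm M ≤ c :=
  Real.iSup_le (fun i => Real.iSup_le (h i) hc) hc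

lemma matSupNorm_sub_submatrix_mul_le {k : ℕ} (A : Matrix (Fin n) (Fin m) ℝ)
    {B : Matrix (Fin n) (Fin m) ℝ} {S : Fin k → Fin m} {V : Matrix (Fin k) (Fin m) ℝ}
    (hV : ∀ l j, |V l j| ≤ 1) (hBV : B.submatrix id S * V = B) :
    matSupNorm (A - A.submatrix id S * V) ≤ (k + 1) * matSupNorm (A - B) := by
  set E := A - B
  have hE : A - A.submatrix id S * V = E - E.submatrix id S * V := by
    rw [show E.submatrix id S = A.submatrix id S - B.submatrix id S from rfl, Matrix.sub_mul,
      hBV]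
    simp only [E]
    abel
  refine matSupNorm_le (by positivity [matSupNorm_nonneg E]) fun i j => ?_
  have hsum : |∑ l, E i (S l) * V l j| ≤ k * matSupNorm E :=
    calc |∑ l, E i (S l) * V l j| ≤ ∑ l, |E i (S l)| * |V l j| := by
          simpa only [abs_mul] using Finset.abs_sum_le_sum_abs (fun l => E i (S l) * V l j) _
      _ ≤ ∑ _l : Fin k, matSupNorm E := Finset.sum_le_sum fun l _ =>
          (mul_le_of_le_one_right (abs_nonneg _) (hV l j)).trans (abs_apply_le_matSupNorm E i _)
      _ = k * matSupNorm E := by simp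
  calc |(A - A.submatrix id S * V) i j| = |E i j - ∑ l, E i (S l) * V l j| := by
        rw [hE]
        simp [mul_apply]
    _ ≤ |E i j| + |∑ l, E i (S l) * V l j| := abs_sub _ _
    _ ≤ (k + 1) * matSupNorm E := by linarith [abs_apply_le_matSupNorm E i j]

end matSupNorm

lemma Real.sInf_le_mul_sInf {s t : Set ℝ} {a : ℝ} (ha : 0 ≤ a) (hs : BddBelow s)
    (ht : t.Nonempty) (h : ∀ c ∈ t, ∃ b ∈ s, b ≤ a * c) : sInf s ≤ a * sInf t := by
  rw [← smul_eq_mul, ← Real.sInf_smul_of_nonneg ha]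
  refine le_csInf ht.smul_set ?_
  rintro _ ⟨c, hc, rfl⟩
  obtain ⟨b, hb, hle⟩ := h c hc
  exact (csInf_le hs hb).trans hle

theorem column_subset_selection_linf_approx_general
    {n m k : ℕ} (hm : k ≤ m)
    (A : Matrix (Fin n) (Fin m) ℝ) :
    sInf {c : ℝ | ∃ S : Fin k → Fin m, Function.Injective S ∧
        ∃ V : Matrix (Fin k) (Fin m) ℝ, c = matSupNorm (A - A.submatrix id S * V)}
      ≤ ((k : ℝ) + 1) *
        sInf {c : ℝ | ∃ B : Matrix (Fin n) (Fin m) ℝ, B.rank ≤ k ∧ c = matSupNorm (A - B)} := by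
  refine Real.sInf_le_mul_sInf (by positivity) ⟨0, ?_⟩ ⟨_, 0, by simp, rfl⟩ ?_
  · rintro _ ⟨S, -, V, rfl⟩
    exact matSupNorm_nonneg _
  · rintro _ ⟨B, hB, rfl⟩
    obtain ⟨S, hS, V, hV, hBV⟩ :=
      hasBoundedColumnFactorization_of_rank_le hB (by simpa using hm)
    exact ⟨_, ⟨S, hS, V, rfl⟩, matSupNorm_sub_submatrix_mul_le A hV hBV⟩

/-- For `k ≥ 1` and `A ∈ ℝ^{n×m}` with `m ≥ k`, the minimum of
`|A - A_S V|_∞` over sets `S` of `k` column indices and matrices `V ∈ ℝ^{k×m}` is at most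
`(k+1)` times the minimum of `|A - B|_∞` over matrices `B` of rank at most `k`. -/
theorem column_subset_selection_linf_approx
    {n m k : ℕ} (hk : 1 ≤ k) (hm : k ≤ m)
    (A : Matrix (Fin n) (Fin m) ℝ) :
    sInf {c : ℝ | ∃ S : Fin k → Fin m, Function.Injective S ∧
        ∃ V : Matrix (Fin k) (Fin m) ℝ, c = matSupNorm (A - A.submatrix id S * V)}
      ≤ ((k : ℝ) + 1) *
        sInf {c : ℝ | ∃ B : Matrix (Fin n) (Fin m) ℝ, B.rank ≤ k ∧ c = matSupNorm (A - B)} :=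
  column_subset_selection_linf_approx_general hm A
end

section
/- Let k ≥ 1 and let A = (k+1)·I_{k+1} ∈ ℝ^{(k+1)×(k+1)} be k+1 times the identity matrix. Then for every set S of k column indices of A and for every p ∈ [1, ∞), min_{X ∈ ℝ^{k×(k+1)}} |A − A_S X|_p ≥ k+1, and likewise min_{X ∈ ℝ^{k×(k+1)}} |A − A_S X|_∞ ≥ k+1. -/
open Matrix

/-- Let `k ≥ 1` and `A = (k+1)·I_{k+1}`. Then for every set `S` of `k` column
indices of `A` and every `p ∈ [1, ∞)`, `min_X |A - A_S X|_p ≥ k+1`, and likewise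
`min_X |A - A_S X|_∞ ≥ k+1`. -/
theorem scaled_identity_column_subset_cost_lower_bound
    {k : ℕ} (hk : 1 ≤ k) (A : Matrix (Fin (k + 1)) (Fin (k + 1)) ℝ)
    (hA : A = ((k : ℝ) + 1) • (1 : Matrix (Fin (k + 1)) (Fin (k + 1)) ℝ)) :
    ∀ S : Fin k → Fin (k + 1), Function.Injective S →
      (∀ p : ℝ, 1 ≤ p → ∀ X : Matrix (Fin k) (Fin (k + 1)) ℝ,
        (k : ℝ) + 1 ≤ matLpNorm p (A - A.submatrix id S * X)) ∧
      (∀ X : Matrix (Fin k) (Fin (k + 1)) ℝ,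
        (k : ℝ) + 1 ≤ matSupNorm (A - A.submatrix id S * X)) := by
  intro S hS
  have hns : ¬ Function.Surjective S := by
    intro h
    have := Fintype.card_le_of_surjective S h
    simp at this
  rw [Function.Surjective] at hns
  push_neg at hns
  obtain ⟨j₀, hj₀⟩ := hns
  have key : ∀ X : Matrix (Fin k) (Fin (k + 1)) ℝ,
      (A - A.submatrix id S * X) j₀ j₀ = (k : ℝ) + 1 := by
    intro X
    have hz : ∀ t : Fin k, A j₀ (S t) = 0 := by
      intro t
      rw [hA]
      simp [Matrix.one_apply, fun t => (hj₀ t).symm, (hj₀ t).symm]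
    rw [Matrix.sub_apply, Matrix.mul_apply,
      Finset.sum_eq_zero (fun t _ => by simp [Matrix.submatrix_apply, hz t]),
      sub_zero, hA]
    simp
  have hkpos : (0 : ℝ) ≤ (k : ℝ) + 1 := by positivity
  constructor
  · intro p hp X
    set M := A - A.submatrix id S * X with hMdef
    have hp0 : p ≠ 0 := by linarith
    have h1 : ((k : ℝ) + 1) ^ p ≤ ∑ i, ∑ j, |M i j| ^ p := by
      have hM : M j₀ j₀ = (k : ℝ) + 1 := key X
      calc ((k : ℝ) + 1) ^ p = |M j₀ j₀| ^ p := by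
            rw [hM, abs_of_nonneg hkpos]
        _ ≤ ∑ j, |M j₀ j| ^ p :=
            Finset.single_le_sum (f := fun j => |M j₀ j| ^ p)
              (fun j _ => by positivity) (Finset.mem_univ j₀)
        _ ≤ ∑ i, ∑ j, |M i j| ^ p :=
            Finset.single_le_sum (f := fun i => ∑ j, |M i j| ^ p)
              (fun i _ => Finset.sum_nonneg fun j _ => by positivity)
              (Finset.mem_univ j₀)
    have h2 : (((k : ℝ) + 1) ^ p) ^ (1 / p) ≤ (∑ i, ∑ j, |M i j| ^ p) ^ (1 / p) :=
      Real.rpow_le_rpow (by positivity) h1 (by positivity)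
    have h3 : (((k : ℝ) + 1) ^ p) ^ (1 / p) = (k : ℝ) + 1 := by
      rw [← Real.rpow_mul hkpos, mul_one_div, div_self hp0, Real.rpow_one]
    rw [matLpNorm, ← h3]
    exact h2
  · intro X
    set M := A - A.submatrix id S * X with hMdef
    have hM : M j₀ j₀ = (k : ℝ) + 1 := key X
    calc (k : ℝ) + 1 = |M j₀ j₀| := by rw [hM, abs_of_nonneg hkpos]
      _ ≤ ⨆ j, |M j₀ j| :=
          le_ciSup (f := fun j => |M j₀ j|) (Set.Finite.bddAbove (Set.finite_range _)) j₀
      _ ≤ ⨆ i, ⨆ j, |M i j| :=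
          le_ciSup (f := fun i => ⨆ j, |M i j|) (Set.Finite.bddAbove (Set.finite_range _)) j₀
end
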